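/- Let X₁, X₂, … be a strictly stationary and ergodic sequence of real random variables with unbounded support above (essential supremum +∞) and let (kₙ) be integers with 1 ≤ kₙ ≤ n and kₙ/n → 1. Then the order statistics X_{kₙ:n} converge almost surely to +∞ as n → ∞. -/

import Mathlib

open MeasureTheory Filter Set
open scoped Topology ENNReal

noncomputable section

/-- The shift map on real sequences. -/
def seqShift (y : ℕ → ℝ) : ℕ → ℝ := fun n => y (n + 1)

/-- The path map associating to each sample point the sequence of observations. -/
def path {Ω : Type*} (X : ℕ → Ω → ℝ) (ω : Ω) : ℕ → ℝ := fun n => X n ω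

/-- The `k`-th smallest value (k counted from 1) among `x 0, …, x (n-1)`. -/
def ordStat (k n : ℕ) (x : ℕ → ℝ) : ℝ :=
  ((List.ofFn (fun i : Fin n => x i)).insertionSort (· ≤ ·)).getD (k - 1) 0

/-- Number of observations among `x 0, …, x (n-1)` in the left `a`-neighborhood of the
`k`-th order statistic. -/
def nearCount (k n : ℕ) (a : ℝ) (x : ℕ → ℝ) : ℕ :=
  ((Finset.range n).filter
    (fun i => ordStat k n x - a < x i ∧ x i < ordStat k n x)).card

/-- Sum of observations among `x 0, …, x (n-1)` in the left `a`-neighborhood of the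
`k`-th order statistic. -/
def nearSum (k n : ℕ) (a : ℝ) (x : ℕ → ℝ) : ℝ :=
  ∑ i ∈ Finset.range n,
    if ordStat k n x - a < x i ∧ x i < ordStat k n x then x i else 0

/-- The right endpoint `sup {x : P(X ≤ x) < 1}` of the support of `X`, as an extended real. -/
def rightEndpoint {Ω : Type*} [MeasurableSpace Ω] (μ : Measure Ω) (X : Ω → ℝ) : EReal :=
  sSup ((fun r : ℝ => (r : EReal)) '' {r : ℝ | μ {ω | X ω ≤ r} < 1})

/-!
Fix a level `M` and let `g = 1{x₀ ≤ M}` on path space, so that `∫ g = P(X₁ ≤ M) < 1`. If the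
Birkhoff sums satisfy `Sₙ g < ρ n` eventually for some `ρ < 1`, then, since `kₙ / n → 1`, fewer
than `kₙ` of the first `n` observations are `≤ M`, i.e. `X_{kₙ:n} > M`.

The ergodic input is obtained without Birkhoff's theorem. For `∫ g < ρ` the set where
`ρ n - Sₙ g → ∞` is shift-invariant, hence null or conull. If it were null, almost every orbit
would have initial blocks of average `≥ ρ'` for some `∫ g < ρ' < ρ`; covering `[0, N)` greedily
by such blocks and integrating shows `ρ' ≤ ∫ g`, a contradiction.
-/

/-- Cut `[0, N)` greedily into blocks of average at least `ρ`; only the last, incomplete one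
can fall short, by at most `ρ L`. -/
theorem sub_le_birkhoffSum_of_forall_exists {α : Type*} {σ : α → α} {g : α → ℝ}
    (hg : ∀ y, 0 ≤ g y) {ρ : ℝ} (hρ : 0 ≤ ρ) {L : ℕ}
    (hblock : ∀ y, ∃ t, 0 < t ∧ t ≤ L ∧ ρ * t ≤ birkhoffSum σ g t y) (N : ℕ) (y : α) :
    ρ * N - ρ * L ≤ birkhoffSum σ g N y := by
  induction N using Nat.strong_induction_on generalizing y with
  | _ N ih =>
    obtain ⟨t, ht0, htL, ht⟩ := hblock y
    rcases le_or_gt t N with htN | hNt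
    · have hrest := ih (N - t) (by omega) (σ^[t] y)
      rw [← Nat.add_sub_cancel' htN, birkhoffSum_add, Nat.cast_add]
      linarith
    · have hNL : (N : ℝ) ≤ L := by exact_mod_cast (hNt.trans_le htL).le
      have hS : 0 ≤ birkhoffSum σ g N y := Finset.sum_nonneg fun _ _ => hg _
      nlinarith

section BirkhoffSum

variable {α : Type*} [MeasurableSpace α] {ν : Measure α} {σ : α → α} {g : α → ℝ}

theorem measurable_birkhoffSum (hσ : Measurable σ) (hg : Measurable g) (n : ℕ) :
    Measurable (birkhoffSum σ g n) :=
  Finset.measurable_sum _ fun i _ => hg.comp (hσ.iterate i)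

theorem integrable_birkhoffSum (hσ : MeasurePreserving σ ν ν) (hg : Integrable g ν) (n : ℕ) :
    Integrable (birkhoffSum σ g n) ν :=
  integrable_finsetSum _ fun i _ => (hσ.iterate i).integrable_comp_of_integrable hg

theorem integral_birkhoffSum (hσ : MeasurePreserving σ ν ν) (hg : Integrable g ν) (n : ℕ) :
    ∫ y, birkhoffSum σ g n y ∂ν = n * ∫ y, g y ∂ν := by
  have hcomp (i : ℕ) : ∫ y, g (σ^[i] y) ∂ν = ∫ y, g y ∂ν := by
    have hi := hσ.iterate i
    rw [← integral_map hi.aemeasurable (by rw [hi.map_eq]; exact hg.aestronglyMeasurable),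
      hi.map_eq]
  unfold birkhoffSum
  rw [integral_finsetSum _ fun i _ => by
    exact (hσ.iterate i).integrable_comp_of_integrable hg]
  simp only [hcomp, Finset.sum_const, Finset.card_range, nsmul_eq_mul]

theorem le_integral_of_forall_sub_le_birkhoffSum [IsProbabilityMeasure ν]
    (hσ : MeasurePreserving σ ν ν) (hg : Integrable g ν) {ρ C : ℝ}
    (h : ∀ N y, ρ * N - C ≤ birkhoffSum σ g N y) : ρ ≤ ∫ y, g y ∂ν := by
  have hint (N : ℕ) : ρ * N - C ≤ N * ∫ y, g y ∂ν := by
    simpa [integral_birkhoffSum hσ hg] using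
      integral_mono (integrable_const _) (integrable_birkhoffSum hσ hg N) (h N)
  by_contra! hlt
  obtain ⟨N, hN⟩ := exists_nat_gt (C / (ρ - ∫ y, g y ∂ν))
  have := (div_lt_iff₀ (sub_pos.2 hlt)).1 hN
  linarith [hint N]

theorem le_integral_add_of_forall_notMem_exists [IsProbabilityMeasure ν]
    (hσ : MeasurePreserving σ ν ν) (hg : Integrable g ν) (hg0 : ∀ y, 0 ≤ g y) {ρ : ℝ}
    (hρ : 0 ≤ ρ) {E : Set α} (hE : MeasurableSet E) {L : ℕ} (hL : 1 ≤ L)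
    (hblock : ∀ y ∉ E, ∃ t, 0 < t ∧ t ≤ L ∧ ρ * t ≤ birkhoffSum σ g t y) :
    ρ ≤ ∫ y, g y ∂ν + ρ * ν.real E := by
  -- raising `g` by `ρ` on `E` makes every point start a block of average at least `ρ`
  set G := g + E.indicator fun _ => ρ
  have hgG : g ≤ G := le_add_of_nonneg_right (indicator_nonneg (fun _ _ => hρ))
  have hGi : Integrable G ν := hg.add ((integrable_const ρ).indicator hE)
  have hGblock (y : α) : ∃ t, 0 < t ∧ t ≤ L ∧ ρ * t ≤ birkhoffSum σ G t y := by
    by_cases hy : y ∈ E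
    · refine ⟨1, one_pos, hL, ?_⟩
      simp [G, birkhoffSum_one, hy, hg0 y]
    · obtain ⟨t, ht0, htL, ht⟩ := hblock y hy
      exact ⟨t, ht0, htL, ht.trans (Finset.sum_le_sum fun _ _ => hgG _)⟩
  have := le_integral_of_forall_sub_le_birkhoffSum hσ hGi
    (sub_le_birkhoffSum_of_forall_exists (fun y => (hg0 y).trans (hgG y)) hρ hGblock)
  rwa [integral_add' hg ((integrable_const ρ).indicator hE), integral_indicator_const ρ hE,
    smul_eq_mul, mul_comm] at this

theorem le_integral_of_ae_exists_le_birkhoffSum [IsProbabilityMeasure ν]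
    (hσ : MeasurePreserving σ ν ν) (hg : Measurable g) (hgi : Integrable g ν)
    (hg0 : ∀ y, 0 ≤ g y) {ρ : ℝ} (hρ : 0 ≤ ρ)
    (h : ∀ᵐ y ∂ν, ∃ t, 0 < t ∧ ρ * t ≤ birkhoffSum σ g t y) : ρ ≤ ∫ y, g y ∂ν := by
  set E : ℕ → Set α := fun L => {y | ∀ t, 0 < t → t ≤ L → birkhoffSum σ g t y < ρ * t}
  have hEmeas (L : ℕ) : MeasurableSet (E L) := by
    simp only [E, ofPred_forall]
    exact .iInter fun t => .iInter fun _ => .iInter fun _ =>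
      measurableSet_lt (measurable_birkhoffSum hσ.measurable hg t) measurable_const
  have hEanti : Antitone E := fun L L' hLL' y hy t ht0 htL => hy t ht0 (htL.trans hLL')
  have hEnull : ν (⋂ L, E L) = 0 := by
    refine measure_mono_null (fun y hy => ?_) (ae_iff.1 h)
    simp only [mem_iInter] at hy
    simp only [mem_ofPred_eq, not_exists, not_and, not_le]
    exact fun t ht0 => hy t t ht0 le_rfl
  have hElim : Tendsto (fun L => ν.real (E L)) atTop (𝓝 0) := by
    have := tendsto_measure_iInter_atTop (fun L => (hEmeas L).nullMeasurableSet) hEanti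
      ⟨0, measure_ne_top ν _⟩
    rw [hEnull] at this
    exact (ENNReal.tendsto_toReal ENNReal.zero_ne_top).comp this
  refine ge_of_tendsto (by simpa using tendsto_const_nhds.add (hElim.const_mul ρ)) ?_
  filter_upwards [eventually_ge_atTop 1] with L hL
  refine le_integral_add_of_forall_notMem_exists hσ hgi hg0 hρ (hEmeas L) hL fun y hy => ?_
  simpa [E] using hy

theorem ae_eventually_birkhoffSum_lt [IsProbabilityMeasure ν] (herg : Ergodic σ ν)
    (hg : Measurable g) (hgi : Integrable g ν) (hg0 : ∀ y, 0 ≤ g y) {ρ : ℝ}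
    (hρ : ∫ y, g y ∂ν < ρ) : ∀ᵐ y ∂ν, ∀ᶠ n in atTop, birkhoffSum σ g n y < ρ * n := by
  set T := {y | Tendsto (fun n : ℕ => ρ * n - birkhoffSum σ g n y) atTop atTop}
  have hTmeas : MeasurableSet T := measurableSet_tendsto atTop fun n =>
    measurable_const.sub (measurable_birkhoffSum herg.measurable hg n)
  have hTinv : σ ⁻¹' T = T := by
    ext y
    have hshift (n : ℕ) : ρ * ↑(n + 1) - birkhoffSum σ g (n + 1) y
        = ρ * n - birkhoffSum σ g n (σ y) + (ρ - g y) := by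
      rw [birkhoffSum_succ']; push_cast; ring
    simp only [mem_preimage, T, mem_ofPred_eq]
    rw [← tendsto_add_atTop_iff_nat 1 (f := fun n : ℕ => ρ * n - birkhoffSum σ g n y)]
    simp only [hshift]
    refine ⟨tendsto_atTop_add_const_right _ _, fun h => ?_⟩
    simpa only [add_neg_cancel_right] using tendsto_atTop_add_const_right _ (-(ρ - g y)) h
  rcases herg.ae_mem_or_ae_notMem hTmeas hTinv with hT | hT
  · filter_upwards [hT] with y hy
    filter_upwards [hy.eventually_gt_atTop 0] with n hn
    linarith
  · exfalso
    obtain ⟨ρ', hgρ', hρ'ρ⟩ := exists_between hρ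
    have hfreq : ∀ᵐ y ∂ν, ∃ t, 0 < t ∧ ρ' * t ≤ birkhoffSum σ g t y := by
      filter_upwards [hT] with y hy
      simp only [T, mem_ofPred_eq, tendsto_atTop, not_forall, not_eventually, not_le] at hy
      obtain ⟨b, hb⟩ := hy
      have hlarge : ∀ᶠ n : ℕ in atTop, 0 < n ∧ b ≤ (ρ - ρ') * n :=
        (eventually_gt_atTop 0).and <| (tendsto_natCast_atTop_atTop.const_mul_atTop
          (sub_pos.2 hρ'ρ)).eventually_ge_atTop b
      obtain ⟨n, hn, hn0, hnb⟩ := (hb.and_eventually hlarge).exists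
      exact ⟨n, hn0, by linarith⟩
    have := le_integral_of_ae_exists_le_birkhoffSum herg.toMeasurePreserving hg hgi hg0
      ((integral_nonneg hg0).trans hgρ'.le) hfreq
    linarith

end BirkhoffSum

theorem List.Pairwise.succ_le_countP_le {α : Type*} [LinearOrder α] {l : List α}
    (hl : l.Pairwise (· ≤ ·)) {i : ℕ} (hi : i < l.length) {M : α} (h : l[i] ≤ M) :
    i + 1 ≤ l.countP (· ≤ M) := by
  induction l generalizing i with
  | nil => simp at hi
  | cons a l ih =>
    rw [List.pairwise_cons] at hl
    cases i with
    | zero => simp_all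
    | succ i =>
      have hi' : i < l.length := by simpa using hi
      have hl' : l[i] ≤ M := h
      have ha : a ≤ M := (hl.1 _ (List.getElem_mem hi')).trans hl'
      simpa [List.countP_cons, ha] using ih hl.2 hi' hl'

theorem countP_ofFn_le_eq_card_filter (n : ℕ) (x : ℕ → ℝ) (M : ℝ) :
    (List.ofFn (fun i : Fin n => x i)).countP (· ≤ M) =
      ((Finset.range n).filter (fun i => x i ≤ M)).card := by
  rw [List.ofFn_eq_map, show (fun i : Fin n => x i) = x ∘ Fin.val from rfl, ← List.map_map,
    List.map_coe_finRange_eq_range, List.countP_map, List.countP_eq_length_filter]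
  rfl

theorem lt_ordStat_of_card_lt {k n : ℕ} {x : ℕ → ℝ} {M : ℝ} (hk : 1 ≤ k) (hkn : k ≤ n)
    (h : ((Finset.range n).filter (fun i => x i ≤ M)).card < k) : M < ordStat k n x := by
  set l := (List.ofFn fun i : Fin n => x i).insertionSort (· ≤ ·)
  have hlen : k - 1 < l.length := by
    simp only [l, List.length_insertionSort, List.length_ofFn]; omega
  rw [ordStat, List.getD_eq_getElem _ _ hlen]
  by_contra! hle
  have := (List.pairwise_insertionSort _ _).succ_le_countP_le hlen hle
  rw [(List.perm_insertionSort _ _).countP_eq, countP_ofFn_le_eq_card_filter] at this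
  omega

theorem seqShift_iterate_apply (i : ℕ) (y : ℕ → ℝ) (m : ℕ) : seqShift^[i] y m = y (m + i) := by
  induction i generalizing y with
  | zero => rfl
  | succ i ih => rw [Function.iterate_succ_apply, ih]; rfl

theorem birkhoffSum_seqShift_indicator (M : ℝ) (n : ℕ) (y : ℕ → ℝ) :
    birkhoffSum seqShift ({z : ℕ → ℝ | z 0 ≤ M}.indicator 1) n y =
      (((Finset.range n).filter (fun i => y i ≤ M)).card : ℝ) := by
  simp [birkhoffSum, indicator_apply, seqShift_iterate_apply, Finset.sum_boole]

theorem ae_eventually_lt_ordStat {ν : Measure (ℕ → ℝ)} [IsProbabilityMeasure ν]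
    (herg : Ergodic seqShift ν) {k : ℕ → ℕ} (hk : ∀ n, 1 ≤ n → 1 ≤ k n ∧ k n ≤ n)
    (hk1 : Tendsto (fun n => (k n : ℝ) / n) atTop (𝓝 1)) {M : ℝ}
    (hM : ν {z | z 0 ≤ M} < 1) : ∀ᵐ y ∂ν, ∀ᶠ n in atTop, M < ordStat (k n) n y := by
  set A := {z : ℕ → ℝ | z 0 ≤ M}
  have hA : MeasurableSet A := measurableSet_le (measurable_pi_apply 0) measurable_const
  have hA1 : ν.real A < 1 := ENNReal.toReal_lt_of_lt_ofReal (by simpa using hM)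
  obtain ⟨ρ, hAρ, hρ1⟩ := exists_between hA1
  have hS := ae_eventually_birkhoffSum_lt (g := A.indicator 1) herg (measurable_const.indicator hA)
    ((integrable_const (1 : ℝ)).indicator hA) (fun _ => indicator_nonneg (fun _ _ => zero_le_one) _)
    (by rwa [integral_indicator_one hA])
  have hρk : ∀ᶠ n : ℕ in atTop, ρ * n < k n := by
    filter_upwards [hk1.eventually_const_lt hρ1, eventually_gt_atTop 0] with n h hn
    rwa [lt_div_iff₀ (by exact_mod_cast hn)] at h
  filter_upwards [hS] with y hy
  filter_upwards [hy, hρk, eventually_ge_atTop 1] with n hSn hkn hn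
  rw [birkhoffSum_seqShift_indicator] at hSn
  exact lt_ordStat_of_card_lt (hk n hn).1 (hk n hn).2 (by exact_mod_cast hSn.trans hkn)

theorem measure_le_lt_one_of_rightEndpoint_eq_top {Ω : Type*} [MeasurableSpace Ω]
    {μ : Measure Ω} {Z : Ω → ℝ} (hsup : rightEndpoint μ Z = ⊤) (M : ℝ) :
    μ {ω | Z ω ≤ M} < 1 := by
  rw [rightEndpoint, sSup_eq_top] at hsup
  obtain ⟨_, ⟨r, hr, rfl⟩, hMr⟩ := hsup M (EReal.coe_lt_top M)
  exact (measure_mono fun ω hω => hω.trans (EReal.coe_lt_coe_iff.1 hMr).le).trans_lt hr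

theorem stmt7 {Ω : Type*} [MeasurableSpace Ω] (μ : Measure Ω) [IsProbabilityMeasure μ]
    (X : ℕ → Ω → ℝ) (hX : ∀ n, Measurable (X n))
    (herg : Ergodic seqShift (Measure.map (path X) μ))
    (hsup : rightEndpoint μ (X 0) = ⊤)
    (k : ℕ → ℕ) (hk : ∀ n, 1 ≤ n → 1 ≤ k n ∧ k n ≤ n)
    (hk1 : Tendsto (fun n => (k n : ℝ) / n) atTop (𝓝 1)) :
    ∀ᵐ ω ∂μ, Tendsto (fun n => ordStat (k n) n (path X ω)) atTop atTop := by
  have hpath : Measurable (path X) := measurable_pi_lambda _ hX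
  have := Measure.isProbabilityMeasure_map (μ := μ) hpath.aemeasurable
  have hM (M : ℝ) : Measure.map (path X) μ {z | z 0 ≤ M} < 1 := by
    rw [Measure.map_apply hpath (measurableSet_le (measurable_pi_apply 0) measurable_const)]
    exact measure_le_lt_one_of_rightEndpoint_eq_top hsup M
  refine ae_of_ae_map (p := fun y => Tendsto (fun n => ordStat (k n) n y) atTop atTop)
    hpath.aemeasurable ?_
  filter_upwards [ae_all_iff.2 fun M : ℕ => ae_eventually_lt_ordStat herg hk hk1 (hM M)]
    with y hy
  refine tendsto_atTop.2 fun b => ?_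
  obtain ⟨M, hbM⟩ := exists_nat_ge b
  exact (hy M).mono fun n hn => hbM.trans hn.le

end
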